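/- arXiv:1201.1581 — 2 statements merged into one kernel-verified Lean document; each statement's English description precedes it below -/
import Mathlib

section
/- Let U ⊂ R^n be open containing the closed unit ball, and let f : U → R^n be a weakly (1+ε)-quasisymmetric embedding with 0 ≤ ε ≤ 1/20 satisfying f(e_1) = e_1 and f(-e_1) = -e_1. Then for every x in the unit ball intersected with the hyperplane L = e_1^⊥, dist(f(x), L) ≤ 2.5 ε. -/
/-!
A point `x ∈ L` of the unit ball is equidistant from `±e₁` and within distance `2` of both, so
weak quasisymmetry makes the distances `a, b` from `f x` to `±e₁` agree up to a factor `1 + ε`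
and bounds both by `2(1 + ε)`. By polarization `b² - a² = 4⟪f x, e₁⟫`, and `|⟪f x, e₁⟫|` is the
distance from `f x` to `L`.
-/

open RealInnerProductSpace

def WeaklyQuasisymmetricOn {X Y : Type*} [PseudoMetricSpace X] [PseudoMetricSpace Y]
    (H : ℝ) (f : X → Y) (U : Set X) : Prop :=
  ∀ a ∈ U, ∀ b ∈ U, ∀ c ∈ U, dist a b ≤ dist a c → dist (f a) (f b) ≤ H * dist (f a) (f c)

theorem sq_sub_sq_le_of_le_mul {a b H M : ℝ} (hH : 1 ≤ H) (ha : 0 ≤ a) (hb : 0 ≤ b)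
    (hba : b ≤ H * a) (haM : a ≤ M) : b ^ 2 - a ^ 2 ≤ (H ^ 2 - 1) * M ^ 2 := by
  have hb2 : b ^ 2 ≤ (H * a) ^ 2 := pow_le_pow_left₀ hb hba 2
  have ha2 : (H ^ 2 - 1) * a ^ 2 ≤ (H ^ 2 - 1) * M ^ 2 :=
    mul_le_mul_of_nonneg_left (pow_le_pow_left₀ ha haM 2) (by nlinarith)
  linarith

namespace WeaklyQuasisymmetricOn

variable {X Y : Type*} [PseudoMetricSpace X] [PseudoMetricSpace Y] {H : ℝ} {f : X → Y}
  {U : Set X}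

theorem abs_sq_dist_sub_sq_dist_le (hf : WeaklyQuasisymmetricOn H f U) (hH : 1 ≤ H)
    {p q x : X} (hp : p ∈ U) (hq : q ∈ U) (hx : x ∈ U) (hxpq : dist x p = dist x q)
    (hxp : dist x p ≤ dist p q) :
    |dist (f x) (f q) ^ 2 - dist (f x) (f p) ^ 2| ≤ (H ^ 2 - 1) * (H * dist (f p) (f q)) ^ 2 := by
  have hpx : dist (f x) (f p) ≤ H * dist (f p) (f q) := by
    rw [dist_comm]
    exact hf p hp x hx q hq (by rwa [dist_comm])
  have hqx : dist (f x) (f q) ≤ H * dist (f p) (f q) := by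
    rw [dist_comm, dist_comm (f p)]
    exact hf q hq x hx p hp (by rwa [dist_comm, ← hxpq, dist_comm q])
  rw [abs_le, neg_le]
  constructor
  · simpa only [neg_sub] using
      sq_sub_sq_le_of_le_mul hH dist_nonneg dist_nonneg (hf x hx p hp q hq hxpq.le) hqx
  · exact sq_sub_sq_le_of_le_mul hH dist_nonneg dist_nonneg (hf x hx q hq p hp hxpq.ge) hpx

end WeaklyQuasisymmetricOn

section InnerProductSpace

variable {F : Type*} [NormedAddCommGroup F] [InnerProductSpace ℝ F]

theorem dist_neg_sq_sub_dist_sq (y e : F) : dist y (-e) ^ 2 - dist y e ^ 2 = 4 * ⟪y, e⟫ := by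
  rw [dist_eq_norm, dist_eq_norm, sub_neg_eq_add, norm_add_sq_real, norm_sub_sq_real]
  ring

theorem infDist_setOf_inner_eq_zero_le {e : F} (he : ‖e‖ = 1) (y : F) :
    Metric.infDist y {z | ⟪z, e⟫ = 0} ≤ |⟪y, e⟫| := by
  have hmem : y - ⟪y, e⟫ • e ∈ {z | ⟪z, e⟫ = 0} := by
    simp [inner_sub_left, real_inner_smul_left, he]
  calc Metric.infDist y {z | ⟪z, e⟫ = 0} ≤ dist y (y - ⟪y, e⟫ • e) :=
        Metric.infDist_le_dist_of_mem hmem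
    _ = |⟪y, e⟫| := by rw [dist_eq_norm, sub_sub_cancel, norm_smul, he, Real.norm_eq_abs, mul_one]

end InnerProductSpace

theorem image_of_hyperplane_close_general {n : ℕ} (hn : 0 < n)
    (U : Set (EuclideanSpace ℝ (Fin n)))
    (hball : Metric.closedBall (0 : EuclideanSpace ℝ (Fin n)) 1 ⊆ U)
    (f : EuclideanSpace ℝ (Fin n) → EuclideanSpace ℝ (Fin n))
    (ε : ℝ) (hε0 : 0 ≤ ε) (hε : ε ≤ 1/20)
    (e₁ : EuclideanSpace ℝ (Fin n)) (he₁ : e₁ = EuclideanSpace.single ⟨0, hn⟩ 1)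
    (hqs : ∀ a ∈ U, ∀ b ∈ U, ∀ c ∈ U,
      dist a b ≤ dist a c → dist (f a) (f b) ≤ (1 + ε) * dist (f a) (f c))
    (hf1 : f e₁ = e₁) (hf2 : f (-e₁) = -e₁) :
    ∀ x ∈ Metric.ball (0 : EuclideanSpace ℝ (Fin n)) 1, ⟪x, e₁⟫ = 0 →
      Metric.infDist (f x) {y : EuclideanSpace ℝ (Fin n) | ⟪y, e₁⟫ = 0} ≤ 2.5 * ε := by
  intro x hx hxe
  have he : ‖e₁‖ = 1 := by rw [he₁, PiLp.norm_single]; norm_num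
  have hee : dist e₁ (-e₁) = 2 := by
    rw [dist_eq_norm, sub_neg_eq_add, ← two_smul ℝ, norm_smul, he]; norm_num
  have hxsym : dist x e₁ = dist x (-e₁) := by
    have := dist_neg_sq_sub_dist_sq x e₁
    rw [hxe, mul_zero, sub_eq_zero] at this
    exact ((pow_left_inj₀ dist_nonneg dist_nonneg two_ne_zero).mp this).symm
  have hxe₁ : dist x e₁ ≤ dist e₁ (-e₁) := by
    rw [hee]
    linarith [dist_le_norm_add_norm x e₁, mem_ball_zero_iff.mp hx]
  have key := WeaklyQuasisymmetricOn.abs_sq_dist_sub_sq_dist_le hqs (by linarith)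
    (hball (by simp [he])) (hball (by simp [he])) (hball (Metric.ball_subset_closedBall hx))
    hxsym hxe₁
  rw [hf1, hf2, hee, dist_neg_sq_sub_dist_sq, abs_mul, abs_of_pos four_pos] at key
  calc Metric.infDist (f x) {y | ⟪y, e₁⟫ = 0} ≤ |⟪f x, e₁⟫| :=
        infDist_setOf_inner_eq_zero_le he (f x)
    _ ≤ 2.5 * ε := by nlinarith [mul_nonneg hε0 hε0, mul_nonneg (mul_nonneg hε0 hε0) hε0]

/-- If `f` is a weakly `(1+ε)`-quasisymmetric embedding, `0 ≤ ε ≤ 1/20`, on an open set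
containing the closed unit ball, fixing `±e₁`, then points of the unit ball on the
hyperplane `L = e₁ᗮ` are mapped within distance `2.5ε` of `L`. -/
theorem image_of_hyperplane_close {n : ℕ} (hn : 0 < n)
    (U : Set (EuclideanSpace ℝ (Fin n))) (hU : IsOpen U)
    (hball : Metric.closedBall (0 : EuclideanSpace ℝ (Fin n)) 1 ⊆ U)
    (f : EuclideanSpace ℝ (Fin n) → EuclideanSpace ℝ (Fin n))
    (hemb : Topology.IsEmbedding (fun x : U => f x))
    (ε : ℝ) (hε0 : 0 ≤ ε) (hε : ε ≤ 1/20)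
    (e₁ : EuclideanSpace ℝ (Fin n)) (he₁ : e₁ = EuclideanSpace.single ⟨0, hn⟩ 1)
    (hqs : ∀ a ∈ U, ∀ b ∈ U, ∀ c ∈ U,
      dist a b ≤ dist a c → dist (f a) (f b) ≤ (1 + ε) * dist (f a) (f c))
    (hf1 : f e₁ = e₁) (hf2 : f (-e₁) = -e₁) :
    ∀ x ∈ Metric.ball (0 : EuclideanSpace ℝ (Fin n)) 1, ⟪x, e₁⟫ = 0 →
      Metric.infDist (f x) {y : EuclideanSpace ℝ (Fin n) | ⟪y, e₁⟫ = 0} ≤ 2.5 * ε :=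
  image_of_hyperplane_close_general hn U hball f ε hε0 hε e₁ he₁ hqs hf1 hf2
end

section
/- If M : (0,1) → (0, 1/3] is increasing with M(t) → 0 as t → 0+ and ∫_0^1 (M(t) log(1/M(t)))^2 dt/t < ∞, then for any constant c > 1, setting φ(t) = t (M(t)/c)^{c/M(t)}, the integral ∫_0^{t_0} (M(t) log(1/M(t)))^2 (φ'(t)/φ(t)) dt is finite for t_0 small enough that φ is increasing on (0, t_0], assuming M is C^1. -/
/-!
Since `φ t = t * exp ((c / M t) * log (M t / c))`, its logarithmic derivative is
`1 / t + c (1 + log c - log M) M' / M²`. The integrand therefore splits into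
`(M log (1/M))² / t`, integrable by hypothesis, and `c (log M)² (1 + log c - log M) M'`.
The latter is nonnegative and is the derivative of `H ∘ M`, where `H u = u Q(log u)` for an
explicit cubic `Q` with `Q + Q' = c X² (1 + log c - X)`; as `H u → 0` when `u → 0⁺`, `H ∘ M`
extends continuously to `[0, t₀]`, and a nonnegative derivative of such a function is integrable.
-/

open MeasureTheory Set Filter Polynomial Real Topology

lemma tendsto_mul_log_pow_nhdsGT_zero (k : ℕ) :
    Tendsto (fun u : ℝ => u * log u ^ k) (𝓝[>] 0) (𝓝 0) := by
  have h := ((tendsto_pow_mul_exp_neg_atTop_nhds_zero k).comp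
    (tendsto_neg_atBot_atTop.comp tendsto_log_nhdsGT_zero)).const_mul ((-1 : ℝ) ^ k)
  rw [mul_zero] at h
  refine h.congr' ?_
  filter_upwards [self_mem_nhdsWithin] with u (hu : 0 < u)
  simp only [Function.comp_apply, neg_neg, exp_log hu]
  rw [← mul_assoc, ← mul_pow, neg_one_mul, neg_neg, mul_comm]

lemma Polynomial.tendsto_mul_eval_log_nhdsGT_zero (P : ℝ[X]) :
    Tendsto (fun u => u * P.eval (log u)) (𝓝[>] 0) (𝓝 0) := by
  induction P using Polynomial.induction_on' with
  | add p q hp hq => simpa [mul_add] using hp.add hq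
  | monomial k a => simpa [mul_left_comm] using (tendsto_mul_log_pow_nhdsGT_zero k).const_mul a

lemma Polynomial.hasDerivAt_mul_eval_log (P : ℝ[X]) {u : ℝ} (hu : u ≠ 0) :
    HasDerivAt (fun v => v * P.eval (log v))
      (P.eval (log u) + (derivative P).eval (log u)) u := by
  refine ((hasDerivAt_id u).mul
    ((P.hasDerivAt (log u)).comp u (hasDerivAt_log hu))).congr_deriv ?_
  simp [field]

noncomputable def diniPrimitivePoly (c : ℝ) : ℝ[X] :=
  C (c * (1 + log c)) * (X ^ 2 - 2 * X + 2) - C c * (X ^ 3 - 3 * X ^ 2 + 6 * X - 6)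

lemma eval_diniPrimitivePoly_add_derivative (c x : ℝ) :
    (diniPrimitivePoly c).eval x + (derivative (diniPrimitivePoly c)).eval x =
      c * x ^ 2 * (1 + log c - x) := by
  simp only [diniPrimitivePoly, map_mul, map_add, map_one, eval_sub, eval_mul, eval_C, eval_add,
    eval_one, eval_pow, eval_X, eval_ofNat, derivative_sub, derivative_mul, derivative_C, zero_mul,
    derivative_one, add_zero, mul_zero, derivative_X_pow_succ, Nat.cast_one, pow_one,
    derivative_ofNat, derivative_X, mul_one, zero_add, Nat.cast_ofNat, sub_zero]
  ring

theorem integrableOn_comp_mul_deriv_of_monotoneOn {M H h : ℝ → ℝ} {b L : ℝ}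
    (hMpos : ∀ t ∈ Ioc 0 b, 0 < M t) (hmono : MonotoneOn M (Ioo 0 b))
    (hdiff : ∀ t ∈ Ioc 0 b, DifferentiableAt ℝ M t) (hlim : Tendsto M (𝓝[>] 0) (𝓝 0))
    (hH : ∀ u > 0, HasDerivAt H (h u) u) (hHlim : Tendsto H (𝓝[>] 0) (𝓝 L))
    (hh : ∀ t ∈ Ioo 0 b, 0 ≤ h (M t)) :
    IntegrableOn (fun t => h (M t) * deriv M t) (Ioc 0 b) := by
  rcases le_or_gt b 0 with hb | hb
  · simp [Ioc_eq_empty_of_le hb]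
  have hMlim : Tendsto M (𝓝[>] 0) (𝓝[>] 0) :=
    tendsto_nhdsWithin_iff.2 ⟨hlim, eventually_of_mem (Ioc_mem_nhdsGT hb) hMpos⟩
  have hderiv : ∀ x ∈ Ioc 0 b, HasDerivAt (fun t => H (M t)) (h (M x) * deriv M x) x :=
    fun x hx => (hH _ (hMpos x hx)).comp x (hdiff x hx).hasDerivAt
  set G : ℝ → ℝ := fun t => if 0 < t then H (M t) else L with hG
  have hGeq : ∀ x > 0, G =ᶠ[𝓝 x] fun t => H (M t) := fun x hx => by
    filter_upwards [lt_mem_nhds hx] with t ht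
    simp [hG, ht]
  apply intervalIntegral.integrableOn_deriv_of_nonneg (g := G)
  · intro x hx
    rcases hx.1.eq_or_lt with rfl | hx0
    · refine (continuousWithinAt_Ioi_iff_Ici.1 ?_).mono Icc_subset_Ici_self
      refine ((hHlim.comp hMlim).congr' ?_).trans_eq (by simp [hG])
      filter_upwards [self_mem_nhdsWithin] with t (ht : 0 < t)
      simp [hG, ht]
    · exact ((hderiv x ⟨hx0, hx.2⟩).continuousAt.congr (hGeq x hx0).symm).continuousWithinAt
  · exact fun x hx => (hderiv x (Ioo_subset_Ioc_self hx)).congr_of_eventuallyEq (hGeq x hx.1)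
  · exact fun x hx => mul_nonneg (hh x hx)
      (hmono.derivWithin_nonneg.trans_eq (derivWithin_of_isOpen isOpen_Ioo hx))

lemma logDeriv_mul_rpow_div {M : ℝ → ℝ} {c t : ℝ} (hc : 0 < c) (ht : t ≠ 0) (hMt : 0 < M t)
    (hM : DifferentiableAt ℝ M t) :
    logDeriv (fun s => s * (M s / c) ^ (c / M s)) t =
      1 / t + c * (1 + log c - log (M t)) / M t ^ 2 * deriv M t := by
  set E : ℝ → ℝ := fun s => log (M s / c) * (c / M s)
  have hE : HasDerivAt E (c * (1 + log c - log (M t)) / M t ^ 2 * deriv M t) t := by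
    refine (((hM.hasDerivAt.div_const c).log (div_pos hMt hc).ne').mul
      ((hasDerivAt_const t c).div hM.hasDerivAt hMt.ne')).congr_deriv ?_
    rw [Pi.div_apply, log_div hMt.ne' hc.ne']
    field_simp
    ring
  have heq : (fun s => s * (M s / c) ^ (c / M s)) =ᶠ[𝓝 t] fun s => s * exp (E s) := by
    filter_upwards [hM.continuousAt.eventually (lt_mem_nhds hMt)] with s hs
    rw [rpow_def_of_pos (div_pos hs hc)]
  rw [(logDeriv_congr_nhds heq).eq_of_nhds,
    logDeriv_mul (f := fun s => s) (g := fun s => exp (E s)) t ht (exp_ne_zero _)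
      differentiableAt_id hE.differentiableAt.exp,
    logDeriv_id', logDeriv_apply, hE.exp.deriv]
  field_simp

theorem dini_change_of_variables_general (M : ℝ → ℝ) (c : ℝ) (hc : 1 < c)
    (hM : ∀ t ∈ Ioo (0:ℝ) 1, 0 < M t ∧ M t ≤ 1/3)
    (hmono : MonotoneOn M (Ioo (0:ℝ) 1))
    (hdiff : ∀ t ∈ Ioo (0:ℝ) 1, DifferentiableAt ℝ M t)
    (hlim : Filter.Tendsto M (nhdsWithin 0 (Ioi 0)) (nhds 0))
    (hint : IntegrableOn (fun t => (M t * Real.log (1/M t))^2 / t) (Ioo (0:ℝ) 1) volume)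
    (φ : ℝ → ℝ) (hφ : ∀ t, φ t = t * (M t / c) ^ (c / M t))
    (t₀ : ℝ) (ht₀1 : t₀ < 1) :
    IntegrableOn (fun t => (M t * Real.log (1/M t))^2 * (deriv φ t / φ t))
      (Ioc 0 t₀) volume := by
  have hsub : Ioc 0 t₀ ⊆ Ioo (0:ℝ) 1 := fun t ht => ⟨ht.1, ht.2.trans_lt ht₀1⟩
  have hweight_nonneg : ∀ t ∈ Ioo 0 t₀, 0 ≤ c * log (M t) ^ 2 * (1 + log c - log (M t)) := by
    intro t ht
    obtain ⟨hMt, hMt3⟩ := hM t (hsub (Ioo_subset_Ioc_self ht))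
    have hlogM : log (M t) ≤ 0 := log_nonpos hMt.le (by linarith)
    exact mul_nonneg (by positivity) (by linarith [log_pos hc])
  have hweight : IntegrableOn
      (fun t => c * log (M t) ^ 2 * (1 + log c - log (M t)) * deriv M t) (Ioc 0 t₀) :=
    integrableOn_comp_mul_deriv_of_monotoneOn (h := fun u => c * log u ^ 2 * (1 + log c - log u))
      (fun t ht => (hM t (hsub ht)).1) (hmono.mono (Ioo_subset_Ioo_right ht₀1.le))
      (fun t ht => hdiff t (hsub ht)) hlim
      (fun u hu => ((diniPrimitivePoly c).hasDerivAt_mul_eval_log hu.ne').congr_deriv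
        (eval_diniPrimitivePoly_add_derivative c (log u)))
      (diniPrimitivePoly c).tendsto_mul_eval_log_nhdsGT_zero hweight_nonneg
  refine ((hint.mono_set hsub).add hweight).congr_fun (fun t ht => ?_) measurableSet_Ioc
  have hMt : 0 < M t := (hM t (hsub ht)).1
  have hφt : deriv φ t / φ t = 1 / t + c * (1 + log c - log (M t)) / M t ^ 2 * deriv M t := by
    rw [funext hφ]
    exact logDeriv_mul_rpow_div (by linarith) ht.1.ne' hMt (hdiff t (hsub ht))
  rw [Pi.add_apply, hφt, one_div, log_inv]
  field_simp

/-- If `M : (0,1) → (0,1/3]` is a `C¹` increasing majorant tending to `0` at `0⁺`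
with `∫₀¹ (M(t) log(1/M(t)))² dt/t < ∞`, and `φ(t) = t (M(t)/c)^{c/M(t)}` for `c > 1`,
then `∫₀^{t₀} (M(t) log(1/M(t)))² (φ'(t)/φ(t)) dt < ∞` for `t₀` with `φ` increasing on
`(0,t₀]`. -/
theorem dini_change_of_variables (M : ℝ → ℝ) (c : ℝ) (hc : 1 < c)
    (hM : ∀ t ∈ Ioo (0:ℝ) 1, 0 < M t ∧ M t ≤ 1/3)
    (hmono : MonotoneOn M (Ioo (0:ℝ) 1))
    (hdiff : ∀ t ∈ Ioo (0:ℝ) 1, DifferentiableAt ℝ M t)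
    (hderivCont : ContinuousOn (deriv M) (Ioo (0:ℝ) 1))
    (hlim : Filter.Tendsto M (nhdsWithin 0 (Ioi 0)) (nhds 0))
    (hint : IntegrableOn (fun t => (M t * Real.log (1/M t))^2 / t) (Ioo (0:ℝ) 1) volume)
    (φ : ℝ → ℝ) (hφ : ∀ t, φ t = t * (M t / c) ^ (c / M t))
    (t₀ : ℝ) (ht₀ : 0 < t₀) (ht₀1 : t₀ < 1)
    (hφmono : MonotoneOn φ (Ioc 0 t₀)) :
    IntegrableOn (fun t => (M t * Real.log (1/M t))^2 * (deriv φ t / φ t))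
      (Ioc 0 t₀) volume :=
  dini_change_of_variables_general M c hc hM hmono hdiff hlim hint φ hφ t₀ ht₀1
end
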